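/- Let f be a group strategy-proof local priority mechanism for a constraint C, and let α be the pointwise union of all implementable local compromiser assignments that induce f. Then for every infeasible allocation x and every allocation y with ∅ ≠ d(x,y) ⊊ α(x), the allocation y is infeasible and α(y) ⊇ α(x) \ d(x,y); in particular, α satisfies forward consistency. -/

import Mathlib

/- Common framework: constrained allocation, local priority mechanisms
   (Root & Ahn, "Local Priority Mechanisms"). Agents `N`, objects `O`.
   A strict preference is encoded as a `LinearOrder` on `O`, where
   `pi.lt b a` means `a` is strictly preferred to `b`. -/

open Classical

noncomputable section

variable {N O : Type}

/-- `a` is strictly preferred to `b` under `pi`. -/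
def sPref (pi : LinearOrder O) (a b : O) : Prop := pi.lt b a

/-- `a` is weakly preferred to `b` under `pi`. -/
def wPref (pi : LinearOrder O) (a b : O) : Prop := a = b ∨ pi.lt b a

/-- The favourite (top-ranked) object under `pi`. -/
def topObj [Fintype O] [Nonempty O] (pi : LinearOrder O) : O :=
  @Finset.max' O pi Finset.univ Finset.univ_nonempty

/-- `tau1 p` is the allocation assigning each agent her favourite object. -/
def tau1 [Fintype O] [Nonempty O] (p : N → LinearOrder O) : N → O :=
  fun i => topObj (p i)

/-- The strict lower contour set of `a` under `pi`, as a finset. -/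
def LCfin [Fintype O] (pi : LinearOrder O) (a : O) : Finset O :=
  Finset.univ.filter fun b => pi.lt b a

/-- The best element of the strict lower contour set of `a` (junk value `a` if empty). -/
def bestLC [Fintype O] (pi : LinearOrder O) (a : O) : O :=
  if h : (LCfin pi a).Nonempty then @Finset.max' O pi _ h else a

/-- At `x`, no local compromiser has an empty strict lower contour set. -/
def lpNoFail [Fintype O] (α : (N → O) → Set N) (p : N → LinearOrder O) (x : N → O) : Prop :=
  ∀ i ∈ α x, (LCfin (p i) (x i)).Nonempty

/-- One step of the local priority algorithm: all local compromisers move to their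
next-favourite object, everyone else stays put. -/
def lpStep [Fintype O] (α : (N → O) → Set N) (p : N → LinearOrder O) (x : N → O) : N → O :=
  fun k => if k ∈ α x then bestLC (p k) (x k) else x k

/-- The local priority algorithm for `α` at profile `p` terminates (without failure)
returning the feasible allocation `y`. -/
def lpRunsTo [Fintype O] [Nonempty O] (C : Set (N → O)) (α : (N → O) → Set N)
    (p : N → LinearOrder O) (y : N → O) : Prop :=
  ∃ (m : ℕ) (x : ℕ → N → O),
    x 0 = tau1 p ∧
    (∀ t < m, x t ∉ C ∧ lpNoFail α p (x t) ∧ x (t + 1) = lpStep α p (x t)) ∧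
    x m = y ∧ y ∈ C

/-- `α` is a local compromiser assignment for the constraint `C`. -/
def IsLCA (C : Set (N → O)) (α : (N → O) → Set N) : Prop :=
  ∀ x, (x ∉ C → (α x).Nonempty) ∧ (x ∈ C → α x = ∅)

/-- `α` is implementable: the local priority algorithm returns a feasible
allocation (never the failure symbol) on every profile. -/
def lpImplementable [Fintype O] [Nonempty O] (C : Set (N → O)) (α : (N → O) → Set N) : Prop :=
  ∀ p : N → LinearOrder O, ∃ y, lpRunsTo C α p y

/-- `α` is an implementable local compromiser assignment for `C` inducing the mechanism `f`,
i.e. `f = LP_α`. -/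
def lpInduces [Fintype O] [Nonempty O] (C : Set (N → O)) (α : (N → O) → Set N)
    (f : (N → LinearOrder O) → N → O) : Prop :=
  IsLCA C α ∧ ∀ p, lpRunsTo C α p (f p)

/-- The local priority mechanism `LP_α` (well defined whenever `α` is implementable,
since the algorithm is deterministic). -/
def LPmech [Fintype O] [Nonempty O] (C : Set (N → O)) (α : (N → O) → Set N)
    (p : N → LinearOrder O) : N → O :=
  if h : ∃ y, lpRunsTo C α p y then h.choose else fun _ => Classical.arbitrary O

/-- Group strategy-proofness. -/
def GSP (f : (N → LinearOrder O) → N → O) : Prop :=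
  ∀ (p p' : N → LinearOrder O) (M : Set N), M.Nonempty → (∀ j ∉ M, p' j = p j) →
    ¬ ((∀ j ∈ M, wPref (p j) (f p' j) (f p j)) ∧ ∃ k ∈ M, sPref (p k) (f p' k) (f p k))

/-- (Individual) strategy-proofness. -/
def StratProof (f : (N → LinearOrder O) → N → O) : Prop :=
  ∀ (p p' : N → LinearOrder O) (i : N), (∀ j, j ≠ i → p' j = p j) →
    ¬ sPref (p i) (f p' i) (f p i)

/-- Nonbossiness. -/
def Nonbossy (f : (N → LinearOrder O) → N → O) : Prop :=
  ∀ (p p' : N → LinearOrder O) (i : N), (∀ j, j ≠ i → p' j = p j) →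
    f p' i = f p i → f p' = f p

/-- Maskin monotonicity. -/
def MaskinMono (f : (N → LinearOrder O) → N → O) : Prop :=
  ∀ p p' : N → LinearOrder O,
    (∀ (i : N) (b : O), (p i).lt b (f p i) → (p' i).lt b (f p i)) → f p' = f p

/-- Unanimity. -/
def Unanimity [Fintype O] [Nonempty O] (C : Set (N → O))
    (f : (N → LinearOrder O) → N → O) : Prop :=
  ∀ p, tau1 p ∈ C → f p = tau1 p

/-- The Fixed compromiser condition. -/
def FixedComp [Fintype O] [Nonempty O] (C : Set (N → O))
    (f : (N → LinearOrder O) → N → O) : Prop :=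
  ∀ μ, μ ∉ C → ∃ i : N, ∀ p, tau1 p = μ → f p i ≠ μ i

/-- `pi'` is obtained from `pi` by moving `c` to the bottom of the ranking. -/
def MoveBottom (pi pi' : LinearOrder O) (c : O) : Prop :=
  (∀ b, b ≠ c → pi'.lt c b) ∧ (∀ a b, a ≠ c → b ≠ c → (pi'.lt a b ↔ pi.lt a b))

/-- Compromiser invariance. -/
def CompInv [Fintype O] [Nonempty O] (C : Set (N → O))
    (f : (N → LinearOrder O) → N → O) : Prop :=
  ∀ μ, μ ∉ C → ∀ p p' : N → LinearOrder O, tau1 p = μ →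
    (∀ i, (∀ q, tau1 q = μ → f q i ≠ μ i) → MoveBottom (p i) (p' i) (μ i)) →
    (∀ i, ¬ (∀ q, tau1 q = μ → f q i ≠ μ i) → p' i = p i) →
    f p' = f p

/-- Pareto efficiency relative to the constraint `C`. -/
def ParetoEff (C : Set (N → O)) (f : (N → LinearOrder O) → N → O) : Prop :=
  ∀ p, ¬ ∃ ν ∈ C, (∀ i, wPref (p i) (ν i) (f p i)) ∧ ∃ k, sPref (p k) (ν k) (f p k)

/-- `diffSet x y = d(x,y)`, the set of agents on which `x` and `y` differ. -/
def diffSet (x y : N → O) : Set N := {i | x i ≠ y i}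

/-- Forward consistency. -/
def ForwardCons (α : (N → O) → Set N) : Prop :=
  ∀ x y : N → O, diffSet x y ⊆ α x → α x \ diffSet x y ⊆ α y

/-- The sequence of allocations `z 0, …, z m` is acyclic. -/
def AcyclicSeq (z : ℕ → N → O) (m : ℕ) : Prop :=
  ∀ (i : N) (r s t : ℕ), r < s → s < t → t ≤ m → z r i = z t i → z s i = z r i

/-- `x` and `y` are `i`-connected under `α`. -/
def IConn (α : (N → O) → Set N) (i : N) (x y : N → O) : Prop :=
  ∃ m : ℕ, 1 ≤ m ∧ ∃ z : ℕ → N → O,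
    z 0 = x ∧ z m = y ∧ AcyclicSeq z m ∧ diffSet (z 0) (z 1) = {i} ∧
    ∀ l < m, diffSet (z l) (z (l + 1)) ⊆ α (z l)

/-- Backward consistency. -/
def BackCons (C : Set (N → O)) (α : (N → O) → Set N) : Prop :=
  ∀ (i : N) (x y : N → O), x ∉ C → y ∉ C → IConn α i x y →
    ∀ x' : N → O, diffSet x x' ⊆ α y → i ∉ diffSet x x' → i ∈ α x'

/-- The pointwise union of all implementable local compromiser assignments inducing `f`. -/
def alphaUnionAll [Fintype O] [Nonempty O] (C : Set (N → O))
    (f : (N → LinearOrder O) → N → O) : (N → O) → Set N :=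
  fun x => {i | ∃ β, lpInduces C β f ∧ i ∈ β x}


/-!
Let `α* z` be the set of agents who, at every profile whose favourite allocation is the
infeasible `z`, do not receive their favourite object. A local compromiser at `τ₁(≻)` ends
strictly below her favourite, so every local compromiser assignment inducing `f` lies inside
`α*`. Conversely, group strategy-proofness gives Maskin monotonicity, and then the local
priority algorithm for `α*` never moves an agent below `f(≻)` and halts exactly at `f(≻)`;
hence `α*` induces `f` and is the union of all assignments inducing `f`.

Forward consistency of `α*` is one group manipulation. Suppose `d(x,y) ⊆ α*(x)`,
`i ∈ α*(x) \ d(x,y)`, and `i` receives `y_i` at some `q` with `τ₁(q) = y`. Let `P` be `q` with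
`f_j(q)` and then `x_j` moved to the top for `j ∈ d(x,y)`. Then `τ₁(P) = x`, so no agent of
`d(x,y) ∪ {i}` gets her favourite at `P`, and this coalition gains by reporting `q`.
-/

noncomputable section

variable {N O : Type}

/-- `c` moved to the top of `pi`, all other objects keeping their relative order. -/
def moveTop (pi : LinearOrder O) (c : O) : LinearOrder O :=
  letI := pi
  LinearOrder.lift' (fun a => toLex ((if a = c then (1 : ℕ) else 0), a))
    (fun _ _ h => congrArg Prod.snd (congrArg ofLex h))

lemma moveTop_lt_of_ne {pi : LinearOrder O} {c a : O} (h : a ≠ c) : (moveTop pi c).lt a c := by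
  let _ := pi
  show toLex ((if a = c then (1 : ℕ) else 0), a) < toLex ((if c = c then (1 : ℕ) else 0), c)
  simp [Prod.Lex.lt_iff, h]

lemma moveTop_lt_iff {pi : LinearOrder O} {c a b : O} (ha : a ≠ c) (hb : b ≠ c) :
    (moveTop pi c).lt a b ↔ pi.lt a b := by
  let _ := pi
  show toLex ((if a = c then (1 : ℕ) else 0), a) < toLex ((if b = c then (1 : ℕ) else 0), b) ↔ _
  simp [Prod.Lex.lt_iff, ha, hb]

lemma wPref_moveTop_moveTop {pi : LinearOrder O} {a b c : O} (hc : c ≠ a) :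
    wPref (moveTop (moveTop pi b) a) b c := by
  by_cases hcb : c = b
  · exact Or.inl hcb.symm
  by_cases hba : b = a
  · subst hba
    exact Or.inr (moveTop_lt_of_ne hc)
  · exact Or.inr ((moveTop_lt_iff hc hba).2 (moveTop_lt_of_ne hcb))

section Favourites

variable [Fintype O] [Nonempty O]

lemma le_topObj (pi : LinearOrder O) (a : O) : pi.le a (topObj pi) := by
  let _ := pi
  exact Finset.le_max' _ a (Finset.mem_univ a)

lemma lt_topObj {pi : LinearOrder O} {a : O} (h : a ≠ topObj pi) : pi.lt a (topObj pi) := by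
  let _ := pi
  exact lt_of_le_of_ne (le_topObj pi a) h

lemma wPref_topObj (pi : LinearOrder O) (a : O) : wPref pi (topObj pi) a := by
  by_cases h : a = topObj pi
  · exact Or.inl h.symm
  · exact Or.inr (lt_topObj h)

lemma topObj_moveTop (pi : LinearOrder O) (c : O) : topObj (moveTop pi c) = c := by
  let _ := moveTop pi c
  by_contra h
  exact (moveTop_lt_of_ne h).not_ge (le_topObj _ c)

lemma tau1_moveTop (p : N → LinearOrder O) (z : N → O) :
    tau1 (fun k => moveTop (p k) (z k)) = z :=
  funext fun k => topObj_moveTop (p k) (z k)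

lemma exists_tau1_eq (z : N → O) : ∃ q : N → LinearOrder O, tau1 q = z :=
  ⟨fun k => moveTop (LinearOrder.lift' _ (Fintype.equivFin O).injective) (z k),
    tau1_moveTop _ z⟩

end Favourites

section LowerContour

variable [Fintype O]

@[simp]
lemma mem_LCfin {pi : LinearOrder O} {a b : O} : b ∈ LCfin pi a ↔ pi.lt b a := by
  simp [LCfin]

lemma LCfin_ssubset_of_lt {pi : LinearOrder O} {a b : O} (h : pi.lt b a) :
    LCfin pi b ⊂ LCfin pi a := by
  let _ := pi
  refine Finset.ssubset_iff_of_subset (fun c hc => ?_) |>.2 ⟨b, mem_LCfin.2 h, ?_⟩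
  · exact mem_LCfin.2 (lt_trans (mem_LCfin.1 hc) h)
  · simp

lemma bestLC_lt {pi : LinearOrder O} {a : O} (h : (LCfin pi a).Nonempty) :
    pi.lt (bestLC pi a) a := by
  let _ := pi
  rw [bestLC, dif_pos h]
  exact mem_LCfin.1 (Finset.max'_mem _ h)

lemma wPref_bestLC {pi : LinearOrder O} {a b : O} (hb : pi.lt b a) :
    wPref pi (bestLC pi a) b := by
  let _ := pi
  have hne : (LCfin pi a).Nonempty := ⟨b, mem_LCfin.2 hb⟩
  rw [bestLC, dif_pos hne]
  exact (Finset.le_max' _ b (mem_LCfin.2 hb)).eq_or_lt'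

lemma lpStep_le {α : (N → O) → Set N} {p : N → LinearOrder O} {x : N → O}
    (hnf : lpNoFail α p x) (k : N) : (p k).le (lpStep α p x k) (x k) := by
  let _ := p k
  unfold lpStep
  split_ifs with hk
  · exact (bestLC_lt (hnf k hk)).le
  · exact le_rfl

def lpPotential [Fintype N] (p : N → LinearOrder O) (x : N → O) : ℕ :=
  ∑ k, (LCfin (p k) (x k)).card

lemma lpPotential_lpStep_lt [Fintype N] {α : (N → O) → Set N} {p : N → LinearOrder O}
    {x : N → O} (hnf : lpNoFail α p x) (hα : (α x).Nonempty) :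
    lpPotential p (lpStep α p x) < lpPotential p x := by
  have hstep : ∀ k ∈ α x, (LCfin (p k) (lpStep α p x k)).card < (LCfin (p k) (x k)).card :=
    fun k hk => by
      rw [lpStep, if_pos hk]
      exact Finset.card_lt_card (LCfin_ssubset_of_lt (bestLC_lt (hnf k hk)))
  refine Finset.sum_lt_sum (fun k _ => ?_) ?_
  · by_cases hk : k ∈ α x
    · exact (hstep k hk).le
    · rw [lpStep, if_neg hk]
  · obtain ⟨k, hk⟩ := hα
    exact ⟨k, Finset.mem_univ k, hstep k hk⟩

end LowerContour

section Run

variable [Fintype O]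

inductive LPRun (C : Set (N → O)) (α : (N → O) → Set N) (p : N → LinearOrder O) :
    (N → O) → (N → O) → Prop
  | halt {x : N → O} : x ∈ C → LPRun C α p x x
  | step {x y : N → O} : x ∉ C → lpNoFail α p x → LPRun C α p (lpStep α p x) y →
      LPRun C α p x y

variable {C : Set (N → O)} {α : (N → O) → Set N} {p : N → LinearOrder O}

lemma LPRun.of_seq (m : ℕ) (w : ℕ → N → O)
    (hw : ∀ t < m, w t ∉ C ∧ lpNoFail α p (w t) ∧ w (t + 1) = lpStep α p (w t))
    (hm : w m ∈ C) : LPRun C α p (w 0) (w m) := by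
  induction m generalizing w with
  | zero => exact .halt hm
  | succ m ih =>
    obtain ⟨h0, hnf, h1⟩ := hw 0 m.succ_pos
    refine .step h0 hnf ?_
    rw [← h1]
    exact ih (fun t => w (t + 1)) (fun t ht => hw (t + 1) (by omega)) hm

lemma LPRun.exists_seq {x y : N → O} (h : LPRun C α p x y) :
    ∃ (m : ℕ) (w : ℕ → N → O), w 0 = x ∧
      (∀ t < m, w t ∉ C ∧ lpNoFail α p (w t) ∧ w (t + 1) = lpStep α p (w t)) ∧
      w m = y ∧ y ∈ C := by
  induction h with
  | halt hx => exact ⟨0, fun _ => _, rfl, fun _ ht => absurd ht (Nat.not_lt_zero _), rfl, hx⟩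
  | @step x y hx hnf _ ih =>
    obtain ⟨m, w, hw0, hw, hwm, hy⟩ := ih
    refine ⟨m + 1, fun t => if t = 0 then x else w (t - 1), rfl, fun t ht => ?_, by simpa, hy⟩
    rcases t with _ | t
    · simpa [hw0] using ⟨hx, hnf⟩
    · simpa using hw t (by omega)

lemma lpRunsTo_iff [Nonempty O] {y : N → O} : lpRunsTo C α p y ↔ LPRun C α p (tau1 p) y := by
  constructor
  · rintro ⟨m, w, hw0, hw, rfl, hm⟩
    exact hw0 ▸ LPRun.of_seq m w hw hm
  · exact LPRun.exists_seq

lemma LPRun.eq_of_mem {x y : N → O} (h : LPRun C α p x y) (hx : x ∈ C) : y = x := by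
  cases h with
  | halt _ => rfl
  | step hx' _ _ => exact absurd hx hx'

lemma LPRun.mem {x y : N → O} (h : LPRun C α p x y) : y ∈ C := by
  induction h with
  | halt hx => exact hx
  | step _ _ _ ih => exact ih

lemma LPRun.le_start {x y : N → O} (h : LPRun C α p x y) (k : N) : (p k).le (y k) (x k) := by
  let _ := p k
  induction h with
  | halt _ => exact le_rfl
  | step _ hnf _ ih => exact ih.trans (lpStep_le hnf k)

lemma LPRun.lt_start {x y : N → O} (h : LPRun C α p x y) (hx : x ∉ C) {k : N} (hk : k ∈ α x) :
    (p k).lt (y k) (x k) := by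
  let _ := p k
  cases h with
  | halt hx' => exact absurd hx' hx
  | step _ hnf hrun =>
    calc y k ≤ lpStep α p x k := hrun.le_start k
      _ = bestLC (p k) (x k) := if_pos hk
      _ < x k := bestLC_lt (hnf k hk)

end Run

section Induced

variable [Fintype O] [Nonempty O] {C : Set (N → O)} {β : (N → O) → Set N}
  {f : (N → LinearOrder O) → N → O}

lemma lpInduces.apply_eq_tau1 (hβ : lpInduces C β f) {q : N → LinearOrder O}
    (h : tau1 q ∈ C) : f q = tau1 q :=
  (lpRunsTo_iff.1 (hβ.2 q)).eq_of_mem h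

lemma lpInduces.lt_tau1 (hβ : lpInduces C β f) {q : N → LinearOrder O} (h : tau1 q ∉ C)
    {k : N} (hk : k ∈ β (tau1 q)) : (q k).lt (f q k) (tau1 q k) :=
  (lpRunsTo_iff.1 (hβ.2 q)).lt_start h hk

end Induced

section GroupStrategyProof

variable {f : (N → LinearOrder O) → N → O}

lemma GSP.stratProof (hgsp : GSP f) : StratProof f := by
  intro p p' i hoff hs
  refine hgsp p p' {i} ⟨i, rfl⟩ (fun j hj => hoff j hj) ⟨?_, i, rfl, hs⟩
  rintro j rfl
  exact Or.inr hs

lemma GSP.nonbossy (hgsp : GSP f) : Nonbossy f := by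
  intro p p' i hoff hsame
  by_contra hne
  obtain ⟨k, hk⟩ := Function.ne_iff.1 hne
  have hki : k ≠ i := fun h => hk (h ▸ hsame)
  let _ := p k
  -- whichever of `p`, `p'` gives `k` the worse object, `{i, k}` deviates from it to the other
  rcases lt_or_gt_of_ne hk with hlt | hgt
  · refine hgsp p' p {i, k} ⟨i, Or.inl rfl⟩
      (fun j hj => (hoff j fun h => hj (Or.inl h)).symm) ⟨?_, k, Or.inr rfl, ?_⟩
    · rintro j (rfl | rfl)
      · exact Or.inl hsame.symm
      · exact Or.inr (hoff j hki ▸ hlt)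
    · exact hoff k hki ▸ hlt
  · refine hgsp p p' {i, k} ⟨i, Or.inl rfl⟩
      (fun j hj => hoff j fun h => hj (Or.inl h)) ⟨?_, k, Or.inr rfl, hgt⟩
    rintro j (rfl | rfl)
    · exact Or.inl hsame
    · exact Or.inr hgt

lemma GSP.eq_of_update (hgsp : GSP f) {p q : N → LinearOrder O} {i : N}
    (hoff : ∀ j, j ≠ i → q j = p j)
    (hlc : ∀ b, (p i).lt b (f p i) → (q i).lt b (f p i)) : f q = f p := by
  have h1 : ¬ sPref (p i) (f q i) (f p i) := hgsp.stratProof p q i hoff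
  have h2 : ¬ sPref (q i) (f p i) (f q i) :=
    hgsp.stratProof q p i fun j hj => (hoff j hj).symm
  let _ := p i
  rcases lt_trichotomy (f q i) (f p i) with hlt | heq | hgt
  · exact absurd (hlc _ hlt) h2
  · exact hgsp.nonbossy p q i hoff heq
  · exact absurd hgt h1

lemma GSP.maskinMono [Fintype N] (hgsp : GSP f) : MaskinMono f := by
  intro p p' h
  suffices H : ∀ S : Finset N, f (fun j => if j ∈ S then p' j else p j) = f p by
    simpa using H Finset.univ
  intro S
  induction S using Finset.induction_on with
  | empty => simp
  | @insert a S ha ih =>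
    rw [← ih]
    refine hgsp.eq_of_update (i := a) (fun j hj => by simp [Finset.mem_insert, hj]) ?_
    intro b hb
    have hfa : f (fun j => if j ∈ S then p' j else p j) a = f p a := congrFun ih a
    beta_reduce at hb ⊢
    rw [if_neg ha, hfa] at hb
    rw [if_pos (Finset.mem_insert_self a S), hfa]
    exact h a b hb

lemma GSP.apply_moveTop_eq [Fintype N] [Fintype O] [Nonempty O] (hgsp : GSP f)
    {p : N → LinearOrder O} {z : N → O} (hz : ∀ k, wPref (p k) (z k) (f p k)) :
    f (fun k => moveTop (p k) (z k)) = f p := by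
  refine hgsp.maskinMono p _ fun k b hb => ?_
  let _ := p k
  have hbz : b ≠ z k := fun h => ((hz k).elim (fun he => he ▸ hb.ne) fun hlt => (hb.trans hlt).ne) h
  rcases hz k with he | hlt
  · exact he ▸ moveTop_lt_of_ne hbz
  · exact (moveTop_lt_iff hbz hlt.ne).2 hb

end GroupStrategyProof

section Compromisers

variable [Fintype O] [Nonempty O] {C : Set (N → O)} {f : (N → LinearOrder O) → N → O}
  {β : (N → O) → Set N}

/-- The largest local compromiser assignment that can induce `f`. -/
def alphaStar (C : Set (N → O)) (f : (N → LinearOrder O) → N → O) (z : N → O) : Set N :=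
  {k | z ∉ C ∧ ∀ q, tau1 q = z → f q k ≠ z k}

lemma alphaUnionAll_subset_alphaStar (z : N → O) : alphaUnionAll C f z ⊆ alphaStar C f z := by
  rintro k ⟨β, hβ, hk⟩
  have hz : z ∉ C := fun hz => by simp [(hβ.1 z).2 hz] at hk
  refine ⟨hz, fun q hq => ?_⟩
  subst hq
  let _ := q k
  exact (hβ.lt_tau1 hz hk).ne

lemma lpInduces.isLCA_alphaStar (hβ : lpInduces C β f) : IsLCA C (alphaStar C f) := by
  refine fun z => ⟨fun hz => ?_, fun hz => Set.eq_empty_of_forall_notMem fun k hk => hk.1 hz⟩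
  obtain ⟨k, hk⟩ := (hβ.1 z).1 hz
  exact ⟨k, alphaUnionAll_subset_alphaStar z ⟨β, hβ, hk⟩⟩

lemma lt_of_mem_alphaStar [Fintype N] (hgsp : GSP f) {p : N → LinearOrder O} {z : N → O}
    (hz : ∀ k, wPref (p k) (z k) (f p k)) {k : N} (hk : k ∈ alphaStar C f z) :
    (p k).lt (f p k) (z k) := by
  have h := hk.2 _ (tau1_moveTop p z)
  rw [hgsp.apply_moveTop_eq hz] at h
  exact (hz k).resolve_left fun he => h he.symm

lemma lpInduces.eq_of_wPref [Fintype N] (hβ : lpInduces C β f) (hgsp : GSP f)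
    {p : N → LinearOrder O} {y : N → O} (hy : y ∈ C) (hwp : ∀ k, wPref (p k) (y k) (f p k)) :
    f p = y :=
  calc f p = f (fun k => moveTop (p k) (y k)) := (hgsp.apply_moveTop_eq hwp).symm
    _ = y := by rw [hβ.apply_eq_tau1 (by rwa [tau1_moveTop]), tau1_moveTop]

lemma exists_lpRun_alphaStar [Fintype N] (hgsp : GSP f) (hβ : lpInduces C β f)
    (p : N → LinearOrder O) {x : N → O} (hx : ∀ k, wPref (p k) (x k) (f p k)) :
    ∃ y, (∀ k, wPref (p k) (y k) (f p k)) ∧ LPRun C (alphaStar C f) p x y := by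
  induction hn : lpPotential p x using Nat.strong_induction_on generalizing x with
  | _ n ih =>
  by_cases hxC : x ∈ C
  · exact ⟨x, hx, .halt hxC⟩
  have hlt : ∀ k ∈ alphaStar C f x, (p k).lt (f p k) (x k) :=
    fun k hk => lt_of_mem_alphaStar hgsp hx hk
  have hnf : lpNoFail (alphaStar C f) p x := fun k hk => ⟨f p k, mem_LCfin.2 (hlt k hk)⟩
  have hstep : ∀ k, wPref (p k) (lpStep (alphaStar C f) p x k) (f p k) := by
    intro k
    unfold lpStep
    split_ifs with hk
    · exact wPref_bestLC (hlt k hk)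
    · exact hx k
  obtain ⟨y, hy, hrun⟩ :=
    ih _ (hn ▸ lpPotential_lpStep_lt hnf ((hβ.isLCA_alphaStar x).1 hxC)) hstep rfl
  exact ⟨y, hy, .step hxC hnf hrun⟩

lemma lpInduces_alphaStar [Fintype N] (hgsp : GSP f) (hβ : lpInduces C β f) :
    lpInduces C (alphaStar C f) f := by
  refine ⟨hβ.isLCA_alphaStar, fun p => lpRunsTo_iff.2 ?_⟩
  obtain ⟨y, hy, hrun⟩ := exists_lpRun_alphaStar hgsp hβ p fun k => wPref_topObj (p k) _
  rwa [hβ.eq_of_wPref hgsp hrun.mem hy]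

lemma alphaUnionAll_eq_alphaStar [Fintype N] (hgsp : GSP f) (hβ : lpInduces C β f) :
    alphaUnionAll C f = alphaStar C f :=
  funext fun z => (alphaUnionAll_subset_alphaStar z).antisymm
    fun _ hk => ⟨_, lpInduces_alphaStar hgsp hβ, hk⟩

lemma apply_ne_of_diffSet_subset_alphaStar (hgsp : GSP f) {x y : N → O}
    (hd : diffSet x y ⊆ alphaStar C f x) {i : N} (hi : i ∈ alphaStar C f x)
    (hid : i ∉ diffSet x y) {q : N → LinearOrder O} (hq : tau1 q = y) : f q i ≠ y i := by
  intro hqi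
  have hxy : ∀ k ∉ diffSet x y, x k = y k := fun k hk => not_not.1 hk
  let P : N → LinearOrder O := fun k =>
    if k ∈ diffSet x y then moveTop (moveTop (q k) (f q k)) (x k) else q k
  have hP : tau1 P = x := by
    funext k
    by_cases hk : k ∈ diffSet x y
    · exact (congrArg topObj (if_pos hk)).trans (topObj_moveTop _ _)
    · exact (congrArg topObj (if_neg hk)).trans ((congrFun hq k).trans (hxy k hk).symm)
  have hPx : ∀ k ∈ alphaStar C f x, f P k ≠ x k := fun k hk => hk.2 P hP
  have hPi : sPref (P i) (f q i) (f P i) := by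
    have htop : topObj (P i) = x i := congrFun hP i
    have hfq : f q i = topObj (P i) := by rw [hqi, htop, hxy i hid]
    show (P i).lt (f P i) (f q i)
    rw [hfq]
    exact lt_topObj fun h => hPx i hi (h.trans htop)
  refine hgsp P q (insert i (diffSet x y)) ⟨i, Set.mem_insert _ _⟩
    (fun j hj => (if_neg fun h => hj (Or.inr h)).symm) ⟨?_, i, Set.mem_insert _ _, hPi⟩
  rintro j (rfl | hj)
  · exact Or.inr hPi
  · show wPref (if j ∈ diffSet x y then _ else _) _ _
    rw [if_pos hj]
    exact wPref_moveTop_moveTop (hPx j (hd hj))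

lemma mem_alphaStar_of_diffSet_subset (hgsp : GSP f) (hβ : lpInduces C β f) {x y : N → O}
    (hd : diffSet x y ⊆ alphaStar C f x) {i : N} (hi : i ∈ alphaStar C f x \ diffSet x y) :
    i ∈ alphaStar C f y := by
  have hne := fun q (hq : tau1 q = y) => apply_ne_of_diffSet_subset_alphaStar hgsp hd hi.1 hi.2 hq
  refine ⟨fun hy => ?_, hne⟩
  obtain ⟨q, hq⟩ := exists_tau1_eq y
  exact hne q hq (by rw [hβ.apply_eq_tau1 (hq ▸ hy), hq])

end Compromisers

end

theorem union_lca_forwardCons_general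
    {N O : Type} [Fintype N] [Fintype O] [Nonempty O]
    (C : Set (N → O))
    (f : (N → LinearOrder O) → N → O)
    (hgsp : GSP f) (hlpm : ∃ α, lpInduces C α f) :
    (∀ x, x ∉ C → ∀ y : N → O, (diffSet x y).Nonempty →
      diffSet x y ⊂ alphaUnionAll C f x →
      y ∉ C ∧ alphaUnionAll C f x \ diffSet x y ⊆ alphaUnionAll C f y) ∧
    ForwardCons (alphaUnionAll C f) := by
  obtain ⟨β, hβ⟩ := hlpm
  have hfwd : ForwardCons (alphaStar C f) :=
    fun x y hd i hi => mem_alphaStar_of_diffSet_subset hgsp hβ hd hi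
  rw [alphaUnionAll_eq_alphaStar hgsp hβ]
  refine ⟨fun x _ y _ hss => ?_, hfwd⟩
  obtain ⟨i, hi, hid⟩ := Set.exists_of_ssubset hss
  exact ⟨(hfwd x y hss.subset ⟨hi, hid⟩).1, hfwd x y hss.subset⟩

/-- necessity of forward consistency.  Let `f` be a group
strategy-proof local priority mechanism and `α` the pointwise union of all
implementable local compromiser assignments inducing `f`.  Then for every infeasible
`x` and every `y` with `∅ ≠ d(x,y) ⊊ α(x)`, `y` is infeasible and
`α(y) ⊇ α(x) \ d(x,y)`; in particular `α` is forward consistent. -/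
theorem union_lca_forwardCons
    {N O : Type} [Fintype N] [Fintype O] [Nonempty O]
    (C : Set (N → O)) (hC : C.Nonempty)
    (f : (N → LinearOrder O) → N → O) (hf : ∀ p, f p ∈ C)
    (hgsp : GSP f) (hlpm : ∃ α, lpInduces C α f) :
    (∀ x, x ∉ C → ∀ y : N → O, (diffSet x y).Nonempty →
      diffSet x y ⊂ alphaUnionAll C f x →
      y ∉ C ∧ alphaUnionAll C f x \ diffSet x y ⊆ alphaUnionAll C f y) ∧
    ForwardCons (alphaUnionAll C f) :=
  union_lca_forwardCons_general C f hgsp hlpm
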